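/- arXiv:1112.4208 — 2 statements merged into one kernel-verified Lean document; each statement's English description precedes it below -/
import Mathlib

section
/- Let α be irrational and suppose there exist b > 1, ε > 0, and infinitely many positive integers q with ‖αq‖ < q·b^{−q·(ln q)^{1+ε}} (where ‖·‖ is distance to nearest integer). Let ρ ∈ (0,1) be such that there exists C > 0 with ‖αρ + jα‖ > C·j^{−ln ln(1+j)} for all j ≥ 1, and ‖αρ‖ > 0. Then for every x > 0 the sequence a_{0,n}·x^n is unbounded, where a_{0,n} = (sin(πρ)/π) · (Γ(ρ+n)/Γ(αρ+αn)) · ∏_{j=1}^{n} sin(πα(ρ+j−1)) / ∏_{i=1}^{n} sin(παi) in absolute value. In particular the series ∑_{n≥0} a_{0,n} x^n does not converge absolutely. -/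
open Real Finset

/-- Distance from a real number to the nearest integer. -/
noncomputable def distNearestInt (x : ℝ) : ℝ := ⨅ n : ℤ, |x - (n : ℝ)|

/-- The absolute value of the coefficient `a_{0,n}` from the series representation
of the density of the supremum of a stable process. -/
noncomputable def absA (α ρ : ℝ) (n : ℕ) : ℝ :=
  Real.sin (π * ρ) / π * (Real.Gamma (ρ + n) / Real.Gamma (α * ρ + α * n))
    * |∏ j ∈ Finset.Icc 1 n, Real.sin (π * α * (ρ + j - 1))|
    / |∏ i ∈ Finset.Icc 1 n, Real.sin (π * α * i)|

/-!
The denominator of `absA α ρ q` contains the factor `sin (π α q)`, of size at most `π ‖α q‖`,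
so along the good approximations `q` it is below `π q b^{-q (log q)^{1+ε}}`; the other
denominator factors are at most `1`. The remaining factors decay much more slowly: by Jordan's
inequality `|sin (π y)| ≥ 2 ‖y‖` each numerator factor is at least `2C q^{-log log (1+q)}`, and
the Gamma ratio is at least `1 / (2q+1)!`. Along those `q` this gives
`absA α ρ q x^q ≥ K exp (q ℓ(q))` with `ℓ(q) = log b (log q)^{1+ε} - O(log q log log q) → ∞`.
-/

open Filter
open scoped Nat

lemma distNearestInt_eq_abs_sub_round (x : ℝ) : distNearestInt x = |x - round x| :=
  le_antisymm (ciInf_le ⟨0, by rintro _ ⟨n, rfl⟩; exact abs_nonneg _⟩ (round x))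
    (le_ciInf (round_le x))

lemma Irrational.distNearestInt_pos {x : ℝ} (h : Irrational x) : 0 < distNearestInt x := by
  rw [distNearestInt_eq_abs_sub_round]
  exact abs_pos.2 (sub_ne_zero.2 (h.ne_int _))

lemma abs_sin_pi_mul_sub_intCast (x : ℝ) (n : ℤ) : |sin (π * (x - n))| = |sin (π * x)| := by
  rw [mul_sub, mul_comm π (n : ℝ), sin_sub_int_mul_pi, abs_mul, abs_neg_one_zpow, one_mul]

lemma abs_sin_pi_mul_le (x : ℝ) : |sin (π * x)| ≤ π * distNearestInt x := by
  rw [distNearestInt_eq_abs_sub_round, ← abs_sin_pi_mul_sub_intCast x (round x)]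
  calc |sin (π * (x - round x))| ≤ |π * (x - round x)| := abs_sin_le_abs
    _ = π * |x - round x| := by rw [abs_mul, abs_of_pos pi_pos]

lemma two_mul_distNearestInt_le_abs_sin_pi_mul (x : ℝ) :
    2 * distNearestInt x ≤ |sin (π * x)| := by
  rw [distNearestInt_eq_abs_sub_round, ← abs_sin_pi_mul_sub_intCast x (round x)]
  set d := x - round x
  have hd : |d| ≤ 1 / 2 := abs_sub_round x
  have hsin_abs : |sin (π * d)| = |sin (π * |d|)| := by
    rcases abs_choice d with h | h <;> rw [h]
    rw [mul_neg, sin_neg, abs_neg]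
  have hjordan := mul_le_sin (x := π * |d|) (by positivity) (by nlinarith [pi_pos])
  calc 2 * |d| = 2 / π * (π * |d|) := by field_simp
    _ ≤ sin (π * |d|) := hjordan
    _ ≤ |sin (π * d)| := hsin_abs ▸ le_abs_self _

lemma sin_pi_mul_ne_zero_of_distNearestInt_pos {x : ℝ} (h : 0 < distNearestInt x) :
    sin (π * x) ≠ 0 := fun hzero => by
  have := two_mul_distNearestInt_le_abs_sin_pi_mul x
  rw [hzero, abs_zero] at this
  linarith

lemma inv_factorial_le_Gamma_div_Gamma {α ρ : ℝ} (hα1 : 1 ≤ α) (hα2 : α ≤ 2) (hρ0 : 0 ≤ ρ)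
    (hρ1 : ρ ≤ 1) {n : ℕ} (hn : 2 ≤ n) :
    (((2 * n + 1)! : ℕ) : ℝ)⁻¹ ≤ Gamma (ρ + n) / Gamma (α * ρ + α * n) := by
  have hn' : (2 : ℝ) ≤ n := by exact_mod_cast hn
  have hmono := Gamma_strictMonoOn_Ici.monotoneOn
  have hnum : 1 ≤ Gamma (ρ + n) :=
    Gamma_two ▸ hmono (Set.mem_Ici.2 le_rfl) (Set.mem_Ici.2 (by linarith)) (by linarith)
  have hden : Gamma (α * ρ + α * n) ≤ ((2 * n + 1)! : ℕ) := by
    rw [← Gamma_nat_eq_factorial]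
    exact hmono (Set.mem_Ici.2 (by nlinarith)) (Set.mem_Ici.2 (by push_cast; linarith))
      (by push_cast; nlinarith)
  rw [inv_eq_one_div]
  exact div_le_div₀ (by linarith) hnum (Gamma_pos_of_pos (by nlinarith)) hden

lemma factorial_two_mul_add_one_le {n : ℕ} (hn : 3 ≤ n) : (2 * n + 1)! ≤ (n ^ 6) ^ n :=
  calc (2 * n + 1)! ≤ (2 * n + 1) ^ (2 * n + 1) := Nat.factorial_le_pow _
    _ ≤ (n ^ 2) ^ (2 * n + 1) := Nat.pow_le_pow_left (by nlinarith) _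
    _ ≤ (n ^ 2) ^ (3 * n) := Nat.pow_le_pow_right (by positivity) (by omega)
    _ = (n ^ 6) ^ n := by ring

lemma log_log_one_add_nonneg {t : ℝ} (ht : 2 ≤ t) : 0 ≤ log (log (1 + t)) :=
  log_nonneg (by rw [le_log_iff_exp_le (by linarith)]; linarith [exp_one_lt_d9])

lemma rpow_neg_log_log_one_add_le {s t : ℝ} (hs : 1 ≤ s) (hst : s ≤ t) (ht : 2 ≤ t) :
    t ^ (-log (log (1 + t))) ≤ s ^ (-log (log (1 + s))) := by
  have hLt := log_log_one_add_nonneg ht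
  rcases le_or_gt (log (log (1 + s))) 0 with hLs | hLs
  · exact (rpow_le_one_of_one_le_of_nonpos (by linarith) (by linarith)).trans
      (one_le_rpow hs (by linarith))
  · have hLst : log (log (1 + s)) ≤ log (log (1 + t)) :=
      log_le_log (log_pos (by linarith)) (log_le_log (by linarith) (by linarith))
    calc t ^ (-log (log (1 + t))) ≤ t ^ (-log (log (1 + s))) :=
          rpow_le_rpow_of_exponent_le (by linarith) (by linarith)
      _ ≤ s ^ (-log (log (1 + s))) := rpow_le_rpow_of_nonpos (by linarith) hst (by linarith)

lemma abs_prod_sin_eq_prod_range (α ρ : ℝ) (n : ℕ) :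
    |∏ j ∈ Icc 1 n, sin (π * α * (ρ + j - 1))| = ∏ k ∈ range n, |sin (π * (α * ρ + k * α))| := by
  rw [abs_prod, ← Finset.Ico_add_one_right_eq_Icc, prod_Ico_eq_prod_range, Nat.add_sub_cancel]
  refine prod_congr rfl fun k _ => ?_
  push_cast
  ring_nf

lemma mul_pow_le_prod_range {f : ℕ → ℝ} {a : ℝ} {n : ℕ} (hn : 1 ≤ n) (ha0 : 0 ≤ a) (ha1 : a ≤ 1)
    (hf0 : 0 ≤ f 0) (hf : ∀ k, 1 ≤ k → k < n → a ≤ f k) : f 0 * a ^ n ≤ ∏ k ∈ range n, f k := by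
  obtain ⟨m, rfl⟩ := Nat.exists_eq_add_of_le' hn
  have hprod : ∏ _k ∈ range m, a ≤ ∏ k ∈ range m, f (k + 1) :=
    prod_le_prod (fun _ _ => ha0) fun k hk => hf (k + 1) (by omega) (by simp at hk; omega)
  rw [prod_const, card_range] at hprod
  calc f 0 * a ^ (m + 1) ≤ f 0 * a ^ m :=
        mul_le_mul_of_nonneg_left (pow_le_pow_of_le_one ha0 ha1 (by omega)) hf0
    _ ≤ (∏ k ∈ range m, f (k + 1)) * f 0 := by rw [mul_comm]; gcongr
    _ = ∏ k ∈ range (m + 1), f k := (prod_range_succ' f m).symm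

lemma abs_prod_sin_pi_mul_le (α : ℝ) {n : ℕ} (hn : 1 ≤ n) :
    |∏ i ∈ Icc 1 n, sin (π * α * i)| ≤ π * distNearestInt (α * n) := by
  rw [abs_prod, ← mul_prod_erase _ _ (mem_Icc.2 ⟨hn, le_rfl⟩)]
  calc |sin (π * α * n)| * ∏ i ∈ (Icc 1 n).erase n, |sin (π * α * i)| ≤ |sin (π * α * n)| * 1 := by
        gcongr
        exact prod_le_one (fun _ _ => abs_nonneg _) fun _ _ => abs_sin_le_one _
    _ ≤ π * distNearestInt (α * n) := by rw [mul_one, mul_assoc]; exact abs_sin_pi_mul_le _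

lemma prod_sin_pi_mul_ne_zero {α : ℝ} (hα : Irrational α) (n : ℕ) :
    ∏ i ∈ Icc 1 n, sin (π * α * i) ≠ 0 :=
  prod_ne_zero_iff.2 fun i hi => by
    rw [mul_assoc]
    exact sin_pi_mul_ne_zero_of_distNearestInt_pos
      (hα.mul_natCast (by rw [mem_Icc] at hi; omega)).distNearestInt_pos

/-- `log` of `x c b^{(log q)^{1+ε}} q^{-log log (1+q)} / q^7`; the `q^7` absorbs both
`(2q+1)! ≤ (q^6)^q` and the factor `q ≤ q^q` in the bound on `‖α q‖`. -/
noncomputable def logGrowthBase (b ε c x : ℝ) (q : ℕ) : ℝ :=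
  log (x * c) + log b * log q ^ (1 + ε) - (7 + log (log (1 + q))) * log q

lemma tendsto_mul_rpow_sub_log_atTop {a ε : ℝ} (ha : 0 < a) (hε : 0 < ε) (d : ℝ) :
    Tendsto (fun t => t * (a * t ^ ε - log t - d)) atTop atTop := by
  have hlog : ∀ᶠ t in atTop, log t ≤ a / 2 * t ^ ε := by
    filter_upwards [(isLittleO_log_rpow_atTop hε).bound (half_pos ha), eventually_gt_atTop 0]
      with t ht ht0
    rw [norm_of_nonneg (rpow_nonneg ht0.le _)] at ht
    exact (le_abs_self _).trans ht
  have hhalf : Tendsto (fun t : ℝ => a / 2 * t ^ ε + -d) atTop atTop :=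
    tendsto_atTop_add_const_right _ _ ((tendsto_rpow_atTop hε).const_mul_atTop (half_pos ha))
  refine tendsto_id.atTop_mul_atTop₀ (tendsto_atTop_mono' _ ?_ hhalf)
  filter_upwards [hlog] with t ht
  linarith

lemma tendsto_logGrowthBase {b ε : ℝ} (hb : 1 < b) (hε : 0 < ε) (c x : ℝ) :
    Tendsto (logGrowthBase b ε c x) atTop atTop := by
  have hmain := (tendsto_mul_rpow_sub_log_atTop (log_pos hb) hε (log 2 + 7)).comp
    (tendsto_log_atTop.comp tendsto_natCast_atTop_atTop)
  refine tendsto_atTop_mono' _ ?_ (tendsto_atTop_add_const_left _ (log (x * c)) hmain)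
  filter_upwards [eventually_ge_atTop 2] with q hq
  have hq' : (2 : ℝ) ≤ q := by exact_mod_cast hq
  have hlogq : 0 < log (q : ℝ) := log_pos (by linarith)
  have hlog : log (1 + q) ≤ 2 * log q :=
    calc log (1 + q) ≤ log ((q : ℝ) ^ 2) := log_le_log (by linarith) (by nlinarith)
      _ = 2 * log q := by rw [log_pow]; norm_num
  have hloglog : log (log (1 + q)) ≤ log 2 + log (log q) := by
    rw [← log_mul two_ne_zero hlogq.ne']
    exact log_le_log (log_pos (by linarith)) hlog
  rw [logGrowthBase, rpow_add hlogq, rpow_one]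
  simp only [Function.comp_apply]
  nlinarith

lemma abs_sin_mul_pow_le_abs_prod_sin {α ρ c : ℝ} (hc0 : 0 < c) (hc1 : c ≤ 1)
    (hsin : ∀ k : ℕ, 1 ≤ k → c * (k : ℝ) ^ (-log (log (1 + k))) ≤ |sin (π * (α * ρ + k * α))|)
    {q : ℕ} (hq : 2 ≤ q) :
    |sin (π * (α * ρ))| * (c * (q : ℝ) ^ (-log (log (1 + q)))) ^ q
      ≤ |∏ j ∈ Icc 1 q, sin (π * α * (ρ + j - 1))| := by
  have hq' : (2 : ℝ) ≤ q := by exact_mod_cast hq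
  have hL := log_log_one_add_nonneg hq'
  have ha1 : c * (q : ℝ) ^ (-log (log (1 + q))) ≤ 1 := mul_le_one₀ hc1 (by positivity)
    (rpow_le_one_of_one_le_of_nonpos (by linarith) (neg_nonpos.2 hL))
  have hfactor (k : ℕ) (hk : 1 ≤ k) (hkq : k < q) :
      c * (q : ℝ) ^ (-log (log (1 + q))) ≤ |sin (π * (α * ρ + k * α))| :=
    le_trans (mul_le_mul_of_nonneg_left (rpow_neg_log_log_one_add_le (by exact_mod_cast hk)
      (by exact_mod_cast hkq.le) hq') hc0.le) (hsin k hk)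
  have h := mul_pow_le_prod_range (f := fun k : ℕ => |sin (π * (α * ρ + k * α))|)
    (by omega) (by positivity) ha1 (abs_nonneg _) hfactor
  rwa [Nat.cast_zero, zero_mul, add_zero, ← abs_prod_sin_eq_prod_range] at h

lemma exp_mul_logGrowthBase_le_absA_mul_pow {α ρ b ε c x : ℝ} (hα1 : 1 ≤ α) (hα2 : α ≤ 2)
    (hirr : Irrational α) (hρ0 : 0 ≤ ρ) (hρ1 : ρ ≤ 1) (hb : 0 < b) (hc0 : 0 < c) (hc1 : c ≤ 1)
    (hx : 0 < x)
    (hsin : ∀ k : ℕ, 1 ≤ k → c * (k : ℝ) ^ (-log (log (1 + k))) ≤ |sin (π * (α * ρ + k * α))|)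
    {q : ℕ} (hq : 3 ≤ q) (hqd : distNearestInt (α * q) < q * b ^ (-(q : ℝ) * log q ^ (1 + ε))) :
    sin (π * ρ) / π * |sin (π * (α * ρ))| / π * exp (q * logGrowthBase b ε c x q)
      ≤ absA α ρ q * x ^ q := by
  have hq' : (3 : ℝ) ≤ q := by exact_mod_cast hq
  set L := log (log (1 + (q : ℝ)))
  set T := log (q : ℝ) ^ (1 + ε)
  set a := c * (q : ℝ) ^ (-L)
  have hnum : |sin (π * (α * ρ))| * a ^ q ≤ |∏ j ∈ Icc 1 q, sin (π * α * (ρ + j - 1))| :=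
    abs_sin_mul_pow_le_abs_prod_sin hc0 hc1 hsin (by omega)
  have hden : |∏ i ∈ Icc 1 q, sin (π * α * i)| ≤ π * ((q : ℝ) / b ^ T) ^ q := by
    refine (abs_prod_sin_pi_mul_le α (by omega)).trans ?_
    gcongr
    have hbT : b ^ (-(q : ℝ) * T) = ((b ^ T) ^ q)⁻¹ := by
      rw [neg_mul, rpow_neg hb.le, mul_comm (q : ℝ) T, rpow_mul hb.le, rpow_natCast]
    refine hqd.le.trans ?_
    rw [hbT, div_pow, div_eq_mul_inv]
    gcongr
    exact le_self_pow₀ (by linarith) (by omega)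
  have hΓ : (((q : ℝ) ^ 6) ^ q)⁻¹ ≤ Gamma (ρ + q) / Gamma (α * ρ + α * q) := by
    refine le_trans ?_ (inv_factorial_le_Gamma_div_Gamma hα1 hα2 hρ0 hρ1 (by omega))
    gcongr
    exact_mod_cast factorial_two_mul_add_one_le hq
  have hexp : exp (q * logGrowthBase b ε c x q) = (x * a * b ^ T / q ^ 7) ^ q := by
    rw [exp_nat_mul, ← exp_log (by positivity : 0 < x * a * b ^ T / q ^ 7)]
    congr 2
    rw [logGrowthBase, log_div (by positivity) (by positivity),
      log_mul (by positivity) (by positivity), log_mul (by positivity) (by positivity),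
      log_mul (by positivity) (by positivity), log_mul (by positivity) (by positivity),
      log_rpow (by positivity), log_rpow (by positivity), log_pow]
    push_cast
    ring
  have hS : 0 ≤ sin (π * ρ) / π :=
    div_nonneg (sin_nonneg_of_nonneg_of_le_pi (by positivity) (by nlinarith [pi_pos])) pi_pos.le
  have hdenpos : 0 < |∏ i ∈ Icc 1 q, sin (π * α * i)| := abs_pos.2 (prod_sin_pi_mul_ne_zero hirr q)
  calc sin (π * ρ) / π * |sin (π * (α * ρ))| / π * exp (q * logGrowthBase b ε c x q)
      = sin (π * ρ) / π * (((q : ℝ) ^ 6) ^ q)⁻¹ * (|sin (π * (α * ρ))| * a ^ q)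
          / (π * ((q : ℝ) / b ^ T) ^ q) * x ^ q := by
        have : (q : ℝ) ≠ 0 := by positivity
        have : b ^ T ≠ 0 := by positivity
        rw [hexp]
        simp only [div_pow, mul_pow, ← pow_mul]
        field_simp
        ring
    _ ≤ absA α ρ q * x ^ q := by
        unfold absA
        gcongr

lemma not_bddAbove_range_of_frequently_le {f g : ℕ → ℝ} (hg : Tendsto g atTop atTop)
    (hfg : ∃ᶠ n in atTop, g n ≤ f n) : ¬ BddAbove (Set.range f) := by
  rintro ⟨M, hM⟩
  obtain ⟨n, hgf, hMg⟩ := (hfg.and_eventually (hg.eventually_gt_atTop M)).exists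
  exact (hMg.trans_le hgf).not_ge (hM (Set.mem_range_self n))

theorem series_not_absolutely_convergent (α ρ : ℝ) (hα : α ∈ Set.Ioo (1:ℝ) 2)
    (hirr : Irrational α) (b ε : ℝ) (hb : 1 < b) (hε : 0 < ε)
    (hq : {q : ℕ | 0 < q ∧
        distNearestInt (α * q) < q * b ^ (-(q : ℝ) * Real.log q ^ (1 + ε))}.Infinite)
    (hρ : ρ ∈ Set.Ioo (0:ℝ) 1)
    (C : ℝ) (hC : 0 < C)
    (hj : ∀ j : ℕ, 1 ≤ j →
        distNearestInt (α * ρ + j * α) > C * (j : ℝ) ^ (-Real.log (Real.log (1 + j))))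
    (h0 : 0 < distNearestInt (α * ρ)) :
    ∀ x : ℝ, 0 < x →
      (¬ BddAbove (Set.range fun n : ℕ => absA α ρ n * x ^ n)) ∧
      ¬ Summable (fun n : ℕ => absA α ρ n * x ^ n) := by
  intro x hx
  obtain ⟨hα1, hα2⟩ := hα
  obtain ⟨hρ0, hρ1⟩ := hρ
  obtain ⟨c, hc0, hc1, hcC⟩ : ∃ c : ℝ, 0 < c ∧ c ≤ 1 ∧ c ≤ 2 * C :=
    ⟨min 1 (2 * C), by positivity, min_le_left _ _, min_le_right _ _⟩
  have hsin (k : ℕ) (hk : 1 ≤ k) :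
      c * (k : ℝ) ^ (-log (log (1 + k))) ≤ |sin (π * (α * ρ + k * α))| :=
    calc c * (k : ℝ) ^ (-log (log (1 + k))) ≤ 2 * (C * (k : ℝ) ^ (-log (log (1 + k)))) := by
          rw [← mul_assoc]; gcongr
      _ ≤ 2 * distNearestInt (α * ρ + k * α) := by gcongr; exact (hj k hk).le
      _ ≤ |sin (π * (α * ρ + k * α))| := two_mul_distNearestInt_le_abs_sin_pi_mul _
  have hK : 0 < sin (π * ρ) / π * |sin (π * (α * ρ))| / π := by
    have := Real.sin_pos_of_pos_of_lt_pi (x := π * ρ) (by positivity) (by nlinarith [pi_pos])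
    have := abs_pos.2 (sin_pi_mul_ne_zero_of_distNearestInt_pos h0)
    positivity
  have hgrowth := ((tendsto_exp_atTop.comp (tendsto_natCast_atTop_atTop.atTop_mul_atTop₀
    (tendsto_logGrowthBase hb hε c x))).const_mul_atTop hK)
  have hfreq : ∃ᶠ q in atTop, sin (π * ρ) / π * |sin (π * (α * ρ))| / π
      * exp (q * logGrowthBase b ε c x q) ≤ absA α ρ q * x ^ q :=
    ((Nat.frequently_atTop_iff_infinite.2 hq).and_eventually (eventually_ge_atTop 3)).mono
      fun q ⟨⟨_, hqd⟩, hq3⟩ => exp_mul_logGrowthBase_le_absA_mul_pow hα1.le hα2.le hirr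
        hρ0.le hρ1.le (by linarith) hc0 hc1 hx hsin hq3 hqd
  have hunbdd := not_bddAbove_range_of_frequently_le hgrowth hfreq
  exact ⟨hunbdd, fun hsum => hunbdd hsum.tendsto_atTop_zero.bddAbove_range⟩
end

section
/- A real number x belongs to L̃ if and only if 1/x belongs to L̃ (for x irrational and nonzero). -/
open Real

/-- The set `L̃` of irrational numbers admitting extremely good rational
approximations: `|x - p/q| < b^{-q (ln q)^{1+ε}}` for infinitely many `(p, q)`. -/
def memLtilde (x : ℝ) : Prop :=
  Irrational x ∧ ∃ ε > (0:ℝ), ∃ b > (1:ℝ),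
    {pq : ℤ × ℤ | 2 ≤ pq.2 ∧
      |x - (pq.1 : ℝ) / (pq.2 : ℝ)|
        < b ^ (-(pq.2 : ℝ) * Real.log (pq.2 : ℝ) ^ (1 + ε))}.Infinite

set_option maxHeartbeats 1000000 in
private lemma Ltilde_inv_aux (x : ℝ) (hx : x ≠ 0) (h : memLtilde x) : memLtilde x⁻¹ := by
  obtain ⟨hirr, ε, hε, b, hb, hS⟩ := h
  have hb0 : (0:ℝ) < b := lt_trans one_pos hb
  have hc : (0:ℝ) < |x| := abs_pos.mpr hx
  set c : ℝ := |x| with hc_def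
  have h2pow : (0:ℝ) < (2:ℝ) ^ (1+ε) := Real.rpow_pos_of_pos two_pos _
  set K : ℝ := (c + 1) * 2 ^ (1 + ε) * 2 with hK_def
  have hK : 0 < K := by
    apply mul_pos (mul_pos (by linarith) h2pow) two_pos
  set R : ℝ := max 3 (max (4 / c + (c + 1))
      (max (-Real.logb b (c / 2)) (2 * Real.logb b (2 / x ^ 2)))) with hR_def
  have hR3 : (3:ℝ) ≤ R := le_max_left _ _
  have hR4c : 4 / c + (c + 1) ≤ R := le_trans (le_max_left _ _) (le_max_right _ _)
  have hRlogb1 : -Real.logb b (c / 2) ≤ R :=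
    le_trans (le_trans (le_max_left _ _) (le_max_right _ _)) (le_max_right _ _)
  have hRlogb2 : 2 * Real.logb b (2 / x ^ 2) ≤ R :=
    le_trans (le_trans (le_max_right _ _) (le_max_right _ _)) (le_max_right _ _)
  set A := {pq : ℤ × ℤ | 2 ≤ pq.2 ∧
      |x - (pq.1 : ℝ) / (pq.2 : ℝ)|
        < b ^ (-(pq.2 : ℝ) * Real.log (pq.2 : ℝ) ^ (1 + ε))} with hA_def
  -- the bound is at most 1
  have hble1 : ∀ pq : ℤ × ℤ, 2 ≤ pq.2 →
      b ^ (-(pq.2 : ℝ) * Real.log (pq.2 : ℝ) ^ (1 + ε)) ≤ 1 := by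
    intro pq hq2
    have hQ2 : (2:ℝ) ≤ (pq.2:ℝ) := by exact_mod_cast hq2
    have hlog : 0 ≤ Real.log (pq.2:ℝ) := Real.log_nonneg (by linarith)
    have hL : 0 ≤ Real.log (pq.2:ℝ) ^ (1+ε) := Real.rpow_nonneg hlog _
    exact Real.rpow_le_one_of_one_le_of_nonpos hb.le
      (by nlinarith)
  -- small denominators give a finite set
  have hfin : (A ∩ {pq : ℤ × ℤ | (pq.2:ℝ) < R}).Finite := by
    apply Set.Finite.subset (Set.finite_Icc ((-⌈(c+1)*R⌉, 2) : ℤ × ℤ) ((⌈(c+1)*R⌉, ⌈R⌉) : ℤ × ℤ))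
    rintro ⟨p, q⟩ ⟨⟨hq2, hlt⟩, hqR⟩
    simp only [Set.mem_setOf_eq] at hqR
    have hQ2 : (2:ℝ) ≤ (q:ℝ) := by exact_mod_cast hq2
    have hQ0 : (0:ℝ) < (q:ℝ) := by linarith
    have h1 : |x - (p:ℝ)/(q:ℝ)| < 1 := lt_of_lt_of_le hlt (hble1 (p,q) hq2)
    have h2 : |(p:ℝ)/(q:ℝ)| < c + 1 := by
      have := abs_sub_abs_le_abs_sub ((p:ℝ)/(q:ℝ)) x
      rw [abs_sub_comm] at this
      linarith
    have h3 : |(p:ℝ)| < (c+1) * (q:ℝ) := by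
      rw [abs_div, abs_of_pos hQ0, div_lt_iff₀ hQ0] at h2
      linarith
    have h4 : |(p:ℝ)| ≤ (c+1) * R := by nlinarith
    have h5 : ((c+1)*R : ℝ) ≤ (⌈(c+1)*R⌉ : ℤ) := Int.le_ceil _
    have h6 : |p| ≤ ⌈(c+1)*R⌉ := by
      have : ((|p| : ℤ) : ℝ) ≤ ((⌈(c+1)*R⌉ : ℤ) : ℝ) := by
        push_cast; linarith
      exact_mod_cast this
    have h7 : q ≤ ⌈R⌉ := by
      have : (q:ℝ) ≤ (⌈R⌉:ℤ) := le_trans (le_of_lt hqR) (Int.le_ceil R)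
      exact_mod_cast this
    constructor
    · exact ⟨(abs_le.mp h6).1, hq2⟩
    · exact ⟨(abs_le.mp h6).2, h7⟩
  set A' := A \ (A ∩ {pq : ℤ × ℤ | (pq.2:ℝ) < R}) with hA'_def
  have hA'inf : A'.Infinite := hS.diff hfin
  set s : ℤ := if 0 < x then 1 else -1 with hs_def
  have hs0 : (s:ℝ) ≠ 0 := by
    rcases lt_or_gt_of_ne hx with h | h
    · simp [hs_def, not_lt.mpr h.le]
    · simp [hs_def, h]
  set f : ℤ × ℤ → ℤ × ℤ := fun pq => (s * pq.2, s * pq.1) with hf_def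
  have hinj : Set.InjOn f A' := by
    intro a _ b _ hab
    have h1 : s * a.2 = s * b.2 := congrArg Prod.fst hab
    have h2 : s * a.1 = s * b.1 := congrArg Prod.snd hab
    have hsz : s ≠ 0 := by exact_mod_cast hs0
    exact Prod.ext (mul_left_cancel₀ hsz h2) (mul_left_cancel₀ hsz h1)
  refine ⟨hirr.inv, ε, hε, b ^ K⁻¹, ?_, ?_⟩
  · show 1 < b ^ K⁻¹
    rw [Real.one_lt_rpow_iff_of_pos hb0]
    exact Or.inl ⟨hb, by positivity⟩
  · apply Set.Infinite.mono _ (hA'inf.image hinj)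
    rintro _ ⟨⟨p, q⟩, hpq, rfl⟩
    obtain ⟨⟨hq2, hlt⟩, hnF⟩ := hpq
    have hqR : R ≤ (q:ℝ) := by
      by_contra hcon
      exact hnF ⟨⟨hq2, hlt⟩, by simpa using lt_of_not_ge hcon⟩
    -- real versions
    have hQ2 : (2:ℝ) ≤ (q:ℝ) := by exact_mod_cast hq2
    have hQ0 : (0:ℝ) < (q:ℝ) := by linarith
    have hQ3 : (3:ℝ) ≤ (q:ℝ) := le_trans hR3 hqR
    have hQ4c : 4 / c ≤ (q:ℝ) := by
      have : 0 < c + 1 := by linarith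
      nlinarith
    have hQc1 : c + 1 ≤ (q:ℝ) := by
      have : 0 < 4 / c := by positivity
      nlinarith
    have hlogQ : 1 ≤ Real.log (q:ℝ) := by
      rw [Real.le_log_iff_exp_le hQ0]
      exact le_trans (le_of_lt (lt_trans Real.exp_one_lt_d9 (by norm_num))) hQ3
    set L : ℝ := Real.log (q:ℝ) ^ (1 + ε) with hL_def
    have hL1 : 1 ≤ L := by
      rw [hL_def]
      calc (1:ℝ) = 1 ^ (1+ε) := (Real.one_rpow _).symm
        _ ≤ Real.log (q:ℝ) ^ (1+ε) :=
          Real.rpow_le_rpow (by norm_num) hlogQ (by linarith)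
    have hL0 : 0 < L := lt_of_lt_of_le one_pos hL1
    -- bound is at most c/2
    have hsmall : b ^ (-(q:ℝ) * L) ≤ c / 2 := by
      calc b ^ (-(q:ℝ) * L) ≤ b ^ (-(q:ℝ)) :=
            (Real.rpow_le_rpow_left_iff hb).mpr (by nlinarith)
        _ ≤ b ^ (Real.logb b (c/2)) :=
            (Real.rpow_le_rpow_left_iff hb).mpr (by linarith [hRlogb1, hqR])
        _ = c / 2 := Real.rpow_logb hb0 (ne_of_gt hb) (by positivity)
    have habs : |x - (p:ℝ)/(q:ℝ)| < c / 2 := lt_of_lt_of_le hlt hsmall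
    have hPQlb : c / 2 < |(p:ℝ)/(q:ℝ)| := by
      have := abs_sub_abs_le_abs_sub x ((p:ℝ)/(q:ℝ))
      linarith
    have habsPQ : |(p:ℝ)/(q:ℝ)| = |(p:ℝ)| / (q:ℝ) := by
      rw [abs_div, abs_of_pos hQ0]
    have hPlb : c / 2 * (q:ℝ) < |(p:ℝ)| := by
      rw [habsPQ, lt_div_iff₀ hQ0] at hPQlb
      linarith
    have hP2 : (2:ℝ) < |(p:ℝ)| := by
      have : (2:ℝ) ≤ c / 2 * (q:ℝ) := by
        have h := mul_le_mul_of_nonneg_left hQ4c (le_of_lt (half_pos hc))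
        rw [show c / 2 * (4 / c) = 2 by field_simp; ring] at h
        exact h
      linarith
    have hP0 : (0:ℝ) < |(p:ℝ)| := by linarith
    have hp0 : (p:ℝ) ≠ 0 := by
      intro h0; rw [h0] at hP2; simp at hP2; linarith
    have hPub : |(p:ℝ)| ≤ (c+1) * (q:ℝ) := by
      have h1 : |x - (p:ℝ)/(q:ℝ)| < 1 := lt_of_lt_of_le hlt (hble1 (p,q) hq2)
      have h2 := abs_sub_abs_le_abs_sub ((p:ℝ)/(q:ℝ)) x
      rw [abs_sub_comm] at h2
      rw [habsPQ] at h2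
      have : |(p:ℝ)| / (q:ℝ) ≤ c + 1 := by linarith
      rw [div_le_iff₀ hQ0] at this
      linarith
    have hlogP0 : 0 ≤ Real.log |(p:ℝ)| := Real.log_nonneg (by linarith)
    have hlogP : Real.log |(p:ℝ)| ≤ 2 * Real.log (q:ℝ) := by
      calc Real.log |(p:ℝ)| ≤ Real.log ((c+1) * (q:ℝ)) := by
            apply Real.log_le_log hP0 hPub
        _ = Real.log (c+1) + Real.log (q:ℝ) := Real.log_mul (by linarith) (by linarith)
        _ ≤ Real.log (q:ℝ) + Real.log (q:ℝ) := by
            have := Real.log_le_log (by linarith : (0:ℝ) < c + 1) hQc1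
            linarith
        _ = 2 * Real.log (q:ℝ) := by ring
    set L' : ℝ := Real.log |(p:ℝ)| ^ (1 + ε) with hL'_def
    have hL'0 : 0 ≤ L' := Real.rpow_nonneg hlogP0 _
    have hL'le : L' ≤ 2 ^ (1+ε) * L := by
      rw [hL'_def, hL_def]
      calc Real.log |(p:ℝ)| ^ (1+ε) ≤ (2 * Real.log (q:ℝ)) ^ (1+ε) :=
            Real.rpow_le_rpow hlogP0 hlogP (by linarith)
        _ = 2 ^ (1+ε) * Real.log (q:ℝ) ^ (1+ε) :=
            Real.mul_rpow (by norm_num) (by linarith)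
    have hexp : |(p:ℝ)| * L' ≤ (K / 2) * ((q:ℝ) * L) := by
      have h1 : |(p:ℝ)| * L' ≤ ((c+1) * (q:ℝ)) * (2 ^ (1+ε) * L) :=
        mul_le_mul hPub hL'le hL'0 (by positivity)
      have h2 : ((c+1) * (q:ℝ)) * (2 ^ (1+ε) * L) = (K/2) * ((q:ℝ) * L) := by
        rw [hK_def]; ring
      linarith
    have hbig : 2 / x ^ 2 ≤ b ^ ((q:ℝ) * L / 2) := by
      calc 2 / x ^ 2 = b ^ (Real.logb b (2 / x ^ 2)) :=
            (Real.rpow_logb hb0 (ne_of_gt hb) (by positivity)).symm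
        _ ≤ b ^ ((q:ℝ) / 2) :=
            (Real.rpow_le_rpow_left_iff hb).mpr (by linarith [hRlogb2, hqR])
        _ ≤ b ^ ((q:ℝ) * L / 2) :=
            (Real.rpow_le_rpow_left_iff hb).mpr (by
              have h := mul_le_mul_of_nonneg_left hL1 hQ0.le
              rw [mul_one] at h
              linarith)
    -- sign facts
    have hxP : 0 < x * (p:ℝ) := by
      have h1 : x * (x - (p:ℝ)/(q:ℝ)) ≤ |x * (x - (p:ℝ)/(q:ℝ))| := le_abs_self _
      have h2 : |x * (x - (p:ℝ)/(q:ℝ))| = c * |x - (p:ℝ)/(q:ℝ)| := abs_mul _ _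
      have h3 : c * |x - (p:ℝ)/(q:ℝ)| < c * (c/2) := by
        exact mul_lt_mul_of_pos_left habs hc
      have hxx : x * x = c * c := by
        rw [hc_def, ← abs_mul, abs_of_nonneg (mul_self_nonneg x)]
      have h6 : x * ((p:ℝ)/(q:ℝ)) = x * x - x * (x - (p:ℝ)/(q:ℝ)) := by ring
      have h4 : 0 < x * ((p:ℝ)/(q:ℝ)) := by
        rw [h6, hxx]
        nlinarith [h1, h2, h3, mul_pos hc hc]
      have h5 : x * (p:ℝ) = (x * ((p:ℝ)/(q:ℝ))) * (q:ℝ) := by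
        field_simp
      rw [h5]
      exact mul_pos h4 hQ0
    have hsp : ((s * p : ℤ) : ℝ) = |(p:ℝ)| := by
      by_cases hpos : 0 < x
      · have hppos : 0 < (p:ℝ) := by
          rcases mul_pos_iff.mp hxP with ⟨_, h⟩ | ⟨h, _⟩
          · exact h
          · linarith
        simp only [hs_def, if_pos hpos]
        push_cast
        rw [abs_of_pos hppos]; ring
      · have hxneg : x < 0 := lt_of_le_of_ne (not_lt.mp hpos) hx
        have hpneg : (p:ℝ) < 0 := by
          rcases mul_pos_iff.mp hxP with ⟨h, _⟩ | ⟨_, h⟩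
          · linarith
          · exact h
        simp only [hs_def, if_neg hpos]
        push_cast
        rw [abs_of_neg hpneg]; ring
    have hsq : ((s * q : ℤ) : ℝ) / ((s * p : ℤ) : ℝ) = (q:ℝ) / (p:ℝ) := by
      push_cast
      rw [mul_div_mul_left _ _ hs0]
    -- now prove membership
    simp only [hf_def, Set.mem_setOf_eq]
    constructor
    · have : (2:ℝ) < ((s * p : ℤ) : ℝ) := by rw [hsp]; exact hP2
      exact_mod_cast this.le
    · rw [hsq, hsp]
      -- |x⁻¹ - q/p| = |x - p/q| * (q / (c * |p|))
      have keyeq : x⁻¹ - (q:ℝ)/(p:ℝ) = ((p:ℝ)/(q:ℝ) - x) * ((q:ℝ)/(x*(p:ℝ))) := by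
        field_simp
      have habseq : |x⁻¹ - (q:ℝ)/(p:ℝ)|
          = |x - (p:ℝ)/(q:ℝ)| * ((q:ℝ) / (c * |(p:ℝ)|)) := by
        rw [keyeq, abs_mul, abs_sub_comm, abs_div, abs_mul, abs_of_pos hQ0, hc_def]
      have hw : (q:ℝ) / (c * |(p:ℝ)|) ≤ 2 / x ^ 2 := by
        rw [div_le_div_iff₀ (by positivity) (by positivity)]
        nlinarith [sq_abs x]
      have hw0 : 0 < (q:ℝ) / (c * |(p:ℝ)|) := by positivity
      have hB0 : 0 < b ^ (-(q:ℝ) * L) := Real.rpow_pos_of_pos hb0 _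
      have step1 : |x⁻¹ - (q:ℝ)/(p:ℝ)| < b ^ (-(q:ℝ) * L) * (2 / x ^ 2) := by
        rw [habseq]
        calc |x - (p:ℝ)/(q:ℝ)| * ((q:ℝ) / (c * |(p:ℝ)|))
            < b ^ (-(q:ℝ) * L) * ((q:ℝ) / (c * |(p:ℝ)|)) :=
              mul_lt_mul_of_pos_right hlt hw0
          _ ≤ b ^ (-(q:ℝ) * L) * (2 / x ^ 2) :=
              mul_le_mul_of_nonneg_left hw hB0.le
      have step2 : b ^ (-(q:ℝ) * L) * (2 / x ^ 2) ≤ b ^ (-((q:ℝ) * L) / 2) := by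
        calc b ^ (-(q:ℝ) * L) * (2 / x ^ 2)
            ≤ b ^ (-(q:ℝ) * L) * b ^ ((q:ℝ) * L / 2) :=
              mul_le_mul_of_nonneg_left hbig hB0.le
          _ = b ^ (-(q:ℝ) * L + (q:ℝ) * L / 2) := (Real.rpow_add hb0 _ _).symm
          _ = b ^ (-((q:ℝ) * L) / 2) := by ring_nf
      have step3 : b ^ (-((q:ℝ) * L) / 2)
          ≤ (b ^ K⁻¹) ^ (-|(p:ℝ)| * Real.log |(p:ℝ)| ^ (1 + ε)) := by
        rw [← Real.rpow_mul hb0.le]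
        apply (Real.rpow_le_rpow_left_iff hb).mpr
        have h1 : K⁻¹ * (|(p:ℝ)| * L') ≤ K⁻¹ * ((K/2) * ((q:ℝ) * L)) :=
          mul_le_mul_of_nonneg_left hexp (by positivity)
        have h2 : K⁻¹ * ((K/2) * ((q:ℝ) * L)) = (q:ℝ) * L / 2 := by
          field_simp
        rw [hL'_def] at h1
        nlinarith
      linarith [lt_of_lt_of_le step1 (le_trans step2 step3)]

theorem Ltilde_inv (x : ℝ) (hirr : Irrational x) (hx : x ≠ 0) :
    memLtilde x ↔ memLtilde x⁻¹ := by
  constructor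
  · exact Ltilde_inv_aux x hx
  · intro h
    have := Ltilde_inv_aux x⁻¹ (inv_ne_zero hx) h
    rwa [inv_inv] at this
end
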